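/- arXiv:0907.1633 — 9 statements merged into one kernel-verified Lean document; each statement's English description precedes it below -/
import Mathlib

section
/- Let n ≥ 6 be an even integer. Let G be the group presented by generators g₁, …, g_{n−1} with the two defining relations g_{n−1}·g_{n−2}⁻¹·g_{n−3}·g_{n−4}⁻¹ ⋯ g₃·g₂⁻¹·g₁ = 1 and g_{n−1}⁻¹·g_{n−2}·g_{n−3}⁻¹ ⋯ g₂·g₁⁻¹ = 1, and let H be the group presented by generators g₁, …, g_{n−1}, r with those same two relations together with r² = 1 and r·gᵢ·r = gᵢ⁻¹ for i = 1, …, n−1. Then there exists a group isomorphism φ : H → H_n satisfying φ(r) = r_n and φ(gᵢ) = r_n·rᵢ for all i = 1, …, n−1. -/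
/-- For an even integer `n ≥ 6`, `H_n` is the group presented by generators
`r₁, …, r_n` (here indexed by `Fin n`, with `i : Fin n` standing for `r_{i+1}`) with
defining relations `rᵢ² = 1` for all `i` and `r_n · r_{n-1} ⋯ r₂ · r₁ = 1`. -/
def HnRels (n : ℕ) : Set (FreeGroup (Fin n)) :=
  {w | ∃ i : Fin n, w = FreeGroup.of i * FreeGroup.of i} ∪
    {((List.ofFn (fun i : Fin n => FreeGroup.of i)).reverse).prod}

/-- Relations of the group `H`: generators `g₁, …, g_{n-1}` (with `j : Fin (n-1)`
standing for `g_{j+1}`) and `r` (the generator `none`), with the two surface-group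
relations `g_{n-1} · g_{n-2}⁻¹ · g_{n-3} ⋯ g₃ · g₂⁻¹ · g₁ = 1`,
`g_{n-1}⁻¹ · g_{n-2} · g_{n-3}⁻¹ ⋯ g₂ · g₁⁻¹ = 1`, together with `r² = 1` and
`r · gᵢ · r = gᵢ⁻¹` (equivalently `r · gᵢ · r · gᵢ = 1`) for `i = 1, …, n-1`. -/
def HRels (n : ℕ) : Set (FreeGroup (Option (Fin (n - 1)))) :=
  {((List.ofFn (fun j : Fin (n - 1) => if (j.val + 1) % 2 = 0 then
      (FreeGroup.of (some j))⁻¹ else FreeGroup.of (some j))).reverse).prod} ∪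
  {((List.ofFn (fun j : Fin (n - 1) => if (j.val + 1) % 2 = 1 then
      (FreeGroup.of (some j))⁻¹ else FreeGroup.of (some j))).reverse).prod} ∪
  {FreeGroup.of (none : Option (Fin (n - 1))) * FreeGroup.of none} ∪
  {w | ∃ j : Fin (n - 1), w = FreeGroup.of (none : Option (Fin (n - 1))) *
    FreeGroup.of (some j) * FreeGroup.of none * FreeGroup.of (some j)}

/-!
The map `r ↦ r_n`, `gᵢ ↦ r_n rᵢ` has the inverse `rᵢ ↦ r gᵢ` (`i < n`), `r_n ↦ r`; the only work
is to check that both respect the relations. This comes down to telescoping identities for a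
product of an odd number of factors in which every second factor is inverted: a common left
(or right) factor `c` of all factors cancels down to a single `c` in front (behind); and since
`r gᵢ r = gᵢ⁻¹`, the plain product `(r g_{n-1}) ⋯ (r g₁)` equals `r` times the alternating
product of the `gᵢ`. As `n - 1` is odd, `r_n r_{n-1} ⋯ r₁ = 1` thus corresponds to the first
relation of `H`.
-/

section RevProd

variable {G : Type*} [Group G]

def revProd (e : ℕ → G) : ℕ → G
  | 0 => 1
  | m + 1 => e m * revProd e m

@[simp] lemma revProd_succ (e : ℕ → G) (m : ℕ) : revProd e (m + 1) = e m * revProd e m := rfl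

lemma revProd_of_ne_zero (e : ℕ → G) {m : ℕ} (hm : m ≠ 0) :
    revProd e m = e (m - 1) * revProd e (m - 1) := by
  obtain ⟨m, rfl⟩ := Nat.exists_eq_succ_of_ne_zero hm
  rfl

lemma revProd_two_mul_succ_add_one (e : ℕ → G) (m : ℕ) :
    revProd e (2 * (m + 1) + 1) = e (2 * (m + 1)) * (e (2 * m + 1) * revProd e (2 * m + 1)) :=
  rfl

lemma map_ofFn_reverse_prod {H : Type*} [Group H] (f : H →* G) {m : ℕ} (w : Fin m → H)
    {e : ℕ → G} (h : ∀ j, f (w j) = e j) : f (List.ofFn w).reverse.prod = revProd e m := by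
  induction m with
  | zero => simp [revProd]
  | succ m ih =>
    rw [List.ofFn_succ', List.concat_eq_append, List.reverse_append, List.reverse_singleton,
      List.singleton_append, List.prod_cons, map_mul, revProd_succ, h, ih _ fun j => h _]
    rfl

/-- For odd `m`, `revProd (alternate e) m = e (m-1) * (e (m-2))⁻¹ * ⋯ * (e 1)⁻¹ * e 0`, the shape
of the first relation of `H`. -/
def alternate (e : ℕ → G) (k : ℕ) : G := if (k + 1) % 2 = 0 then (e k)⁻¹ else e k

lemma alternate_two_mul (e : ℕ → G) (m : ℕ) : alternate e (2 * m) = e (2 * m) :=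
  if_neg (by omega)

lemma alternate_two_mul_add_one (e : ℕ → G) (m : ℕ) :
    alternate e (2 * m + 1) = (e (2 * m + 1))⁻¹ :=
  if_pos (by omega)

lemma alternate_eq_self {e : ℕ → G} (he : ∀ k, e k * e k = 1) : alternate e = e := by
  funext k
  simp [alternate, inv_eq_of_mul_eq_one_right (he k)]

lemma revProd_alternate_mul_left (c : G) (x : ℕ → G) {m : ℕ} (hm : Odd m) :
    revProd (alternate (c * x ·)) m = c * revProd (alternate x) m := by
  obtain ⟨m, rfl⟩ := hm
  induction m with
  | zero => simp [revProd, alternate]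
  | succ m ih =>
    simp only [revProd_two_mul_succ_add_one, ih, alternate_two_mul, alternate_two_mul_add_one]
    group

lemma revProd_alternate_mul_right (x : ℕ → G) (c : G) {m : ℕ} (hm : Odd m) :
    revProd (alternate (x · * c)) m = revProd (alternate x) m * c := by
  obtain ⟨m, rfl⟩ := hm
  induction m with
  | zero => simp [revProd, alternate]
  | succ m ih =>
    simp only [revProd_two_mul_succ_add_one, ih, alternate_two_mul, alternate_two_mul_add_one]
    group

lemma revProd_mul_left_of_conj_eq_inv (c : G) (y : ℕ → G) (hc : ∀ k, c * y k * c = (y k)⁻¹)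
    {m : ℕ} (hm : Odd m) : revProd (c * y ·) m = c * revProd (alternate y) m := by
  obtain ⟨m, rfl⟩ := hm
  induction m with
  | zero => simp [revProd, alternate]
  | succ m ih =>
    simp only [revProd_two_mul_succ_add_one, ih, alternate_two_mul, alternate_two_mul_add_one]
    rw [← hc (2 * m + 1)]
    group

end RevProd

namespace HnRels

variable (n : ℕ) [NeZero n]

/-- `gen n k` is the generator `r_{k+1}`, the index being read modulo `n`. -/
def gen (k : ℕ) : PresentedGroup (HnRels n) := .of (Fin.ofNat n k)

lemma gen_eq_of {k : ℕ} (hk : k < n) : gen n k = .of ⟨k, hk⟩ := by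
  simp only [gen, Fin.ofNat, Nat.mod_eq_of_lt hk]

lemma gen_mul_self (k : ℕ) : gen n k * gen n k = 1 :=
  PresentedGroup.one_of_mem (Or.inl ⟨_, rfl⟩)

lemma revProd_gen : revProd (gen n) n = 1 := by
  rw [← PresentedGroup.one_of_mem (rels := HnRels n) (Or.inr rfl)]
  exact (map_ofFn_reverse_prod _ _ fun i => by rw [gen, Fin.ofNat_val_eq_self]; rfl).symm

lemma revProd_gen_pred : revProd (gen n) (n - 1) = gen n (n - 1) := by
  have h := revProd_gen n
  rw [revProd_of_ne_zero _ (NeZero.ne n)] at h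
  exact (eq_inv_of_mul_eq_one_right h).trans (inv_eq_of_mul_eq_one_right (gen_mul_self n _))

end HnRels

namespace HRels

variable (n : ℕ)

def r : PresentedGroup (HRels n) := .of none

/-- `g n k` is the generator `g_{k+1}` for `k < n - 1`, and `1` beyond, so that `r_{k+1}` will be
sent to `r n * g n k` for every `k < n`. -/
def g (k : ℕ) : PresentedGroup (HRels n) := if h : k < n - 1 then .of (some ⟨k, h⟩) else 1

lemma g_eq_of (j : Fin (n - 1)) : g n j = .of (some j) := dif_pos j.isLt

lemma g_eq_one {k : ℕ} (hk : n - 1 ≤ k) : g n k = 1 := dif_neg (by omega)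

lemma r_mul_self : r n * r n = 1 :=
  PresentedGroup.one_of_mem (Or.inl (Or.inr rfl))

lemma r_mul_g_mul_r (k : ℕ) : r n * g n k * r n = (g n k)⁻¹ := by
  by_cases hk : k < n - 1
  · rw [g, dif_pos hk]
    exact eq_inv_of_mul_eq_one_left (PresentedGroup.one_of_mem (Or.inr ⟨⟨k, hk⟩, rfl⟩))
  · rw [g_eq_one n (by omega), mul_one, inv_one, r_mul_self]

lemma revProd_alternate_g : revProd (alternate (g n)) (n - 1) = 1 := by
  rw [← PresentedGroup.one_of_mem (rels := HRels n) (Or.inl (Or.inl (Or.inl rfl)))]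
  refine (map_ofFn_reverse_prod _ _ fun j => ?_).symm
  unfold alternate
  split_ifs <;> simp only [map_inv, g_eq_of] <;> rfl

end HRels

namespace HRels

variable (n : ℕ) [NeZero n]

open HnRels

def toHnGen : Option (Fin (n - 1)) → PresentedGroup (HnRels n) :=
  fun o => o.elim (gen n (n - 1)) fun j => gen n (n - 1) * gen n j

lemma lift_toHnGen_eq_one (hn : Odd (n - 1)) :
    ∀ w ∈ HRels n, FreeGroup.lift (toHnGen n) w = 1 := by
  have hinv (k : ℕ) : (gen n k)⁻¹ = gen n k := inv_eq_of_mul_eq_one_right (gen_mul_self n k)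
  have hcancel (k : ℕ) (x : PresentedGroup (HnRels n)) : gen n k * (gen n k * x) = x := by
    rw [← mul_assoc, gen_mul_self, one_mul]
  rintro w (((rfl | rfl) | rfl) | ⟨j, rfl⟩)
  · rw [map_ofFn_reverse_prod _ _ (e := alternate (gen n (n - 1) * gen n ·)) fun j => by
        unfold alternate; split_ifs <;> simp [toHnGen],
      revProd_alternate_mul_left _ _ hn, alternate_eq_self (gen_mul_self n), revProd_gen_pred,
      gen_mul_self]
  · rw [map_ofFn_reverse_prod _ _ (e := alternate (gen n · * gen n (n - 1))) fun j => by
        unfold alternate; split_ifs <;> simp [toHnGen, hinv] <;> omega,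
      revProd_alternate_mul_right _ _ hn, alternate_eq_self (gen_mul_self n), revProd_gen_pred,
      gen_mul_self]
  · simp [toHnGen, gen_mul_self]
  · simp [toHnGen, mul_assoc, hcancel, gen_mul_self]

def toHn (hn : Odd (n - 1)) : PresentedGroup (HRels n) →* PresentedGroup (HnRels n) :=
  PresentedGroup.toGroup (lift_toHnGen_eq_one n hn)

end HRels

namespace HnRels

variable (n : ℕ)

open HRels

def toHGen (i : Fin n) : PresentedGroup (HRels n) := r n * g n i

lemma lift_toHGen_eq_one (hn : Odd (n - 1)) :
    ∀ w ∈ HnRels n, FreeGroup.lift (toHGen n) w = 1 := by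
  rintro w (⟨i, rfl⟩ | rfl)
  · simp only [map_mul, FreeGroup.lift_apply_of, toHGen]
    rw [← mul_assoc, r_mul_g_mul_r, inv_mul_cancel]
  · rw [map_ofFn_reverse_prod _ _ (e := (r n * g n ·)) fun i => by simp [toHGen]]
    rw [revProd_of_ne_zero _ (by have := hn.pos; omega), g_eq_one _ le_rfl, mul_one,
      revProd_mul_left_of_conj_eq_inv _ _ (r_mul_g_mul_r _) hn, revProd_alternate_g, mul_one,
      r_mul_self]

def toH (hn : Odd (n - 1)) : PresentedGroup (HnRels n) →* PresentedGroup (HRels n) :=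
  PresentedGroup.toGroup (lift_toHGen_eq_one n hn)

end HnRels

section Isomorphism

variable (n : ℕ) [NeZero n] (hn : Odd (n - 1))

open HnRels HRels

lemma HRels.toHn_r : toHn n hn (r n) = gen n (n - 1) := PresentedGroup.toGroup.of _

lemma HRels.toHn_g (j : Fin (n - 1)) : toHn n hn (g n j) = gen n (n - 1) * gen n j := by
  rw [g_eq_of]
  exact PresentedGroup.toGroup.of _

lemma HnRels.toH_gen {k : ℕ} (hk : k < n) : toH n hn (gen n k) = r n * g n k := by
  rw [gen_eq_of n hk]
  exact PresentedGroup.toGroup.of _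

lemma HnRels.toH_comp_toHn : (toH n hn).comp (toHn n hn) = MonoidHom.id _ := by
  have hpred : n - 1 < n := Nat.sub_lt (NeZero.pos n) one_pos
  refine PresentedGroup.ext fun x => ?_
  rcases x with _ | j
  · change toH n hn (toHn n hn (r n)) = r n
    rw [toHn_r, toH_gen n hn hpred, g_eq_one n le_rfl, mul_one]
  · rw [MonoidHom.comp_apply, MonoidHom.id_apply, ← g_eq_of, toHn_g, map_mul,
      toH_gen n hn hpred, toH_gen n hn (by omega), g_eq_one n le_rfl, mul_one, ← mul_assoc,
      r_mul_self, one_mul]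

lemma HRels.toHn_comp_toH : (toHn n hn).comp (toH n hn) = MonoidHom.id _ := by
  refine PresentedGroup.ext fun i => ?_
  rw [MonoidHom.comp_apply, MonoidHom.id_apply, ← gen_eq_of n i.isLt, toH_gen n hn i.isLt,
    map_mul, toHn_r]
  by_cases hi : i.val < n - 1
  · rw [show g n i = g n (⟨i, hi⟩ : Fin (n - 1)) from rfl, toHn_g, ← mul_assoc, gen_mul_self,
      one_mul]
  · rw [g_eq_one n (by omega), map_one, mul_one, show n - 1 = i by omega]

def HRels.isoHn : PresentedGroup (HRels n) ≃* PresentedGroup (HnRels n) :=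
  (toHn n hn).toMulEquiv (toH n hn) (toH_comp_toHn n hn) (toHn_comp_toH n hn)

end Isomorphism

/-- Let `n ≥ 6` be even.  The group `H` presented by generators
`g₁, …, g_{n-1}, r` with the two surface-group relations, `r² = 1`, and
`r · gᵢ · r = gᵢ⁻¹`, is isomorphic to `H_n` via an isomorphism `φ` with `φ r = r_n` and
`φ gᵢ = r_n · rᵢ` for all `i = 1, …, n-1`. -/
theorem H_iso_Hn (n : ℕ) (hn : 6 ≤ n) (hEven : Even n) :
    ∃ φ : PresentedGroup (HRels n) ≃* PresentedGroup (HnRels n),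
      φ (PresentedGroup.of none) = PresentedGroup.of (⟨n - 1, by omega⟩ : Fin n) ∧
      ∀ j : Fin (n - 1), φ (PresentedGroup.of (some j)) =
        PresentedGroup.of (⟨n - 1, by omega⟩ : Fin n) *
          PresentedGroup.of (Fin.castLE (by omega) j) := by
  have : NeZero n := ⟨by omega⟩
  have hodd : Odd (n - 1) := Nat.Even.sub_odd (by omega) hEven odd_one
  refine ⟨HRels.isoHn n hodd, ?_, fun j => ?_⟩
  · exact (HRels.toHn_r n hodd).trans (HnRels.gen_eq_of n _)
  · rw [← HRels.g_eq_of]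
    exact (HRels.toHn_g n hodd j).trans
      (congr_arg₂ (· * ·) (HnRels.gen_eq_of n _) (HnRels.gen_eq_of n _))
end

section
/- The alternating product f₁⁻¹·f₂·f₃⁻¹·f₄ ⋯ f_{n−3}⁻¹·f_{n−2} (taken left to right, with fᵢ inverted for odd i and not inverted for even i, for i = 1, …, n−2) equals the identity element of G. -/
/-!
Put `s = t (n-1)` and `P i = t (i+1) ⋯ t (n-2)`, so `P (n-2) = 1` and `P (i-1) = t i * P i`.
Reversing a product of involutions inverts it, hence `f 1 = s * (P 1)⁻¹` and
`f i = s * (P i)⁻¹ * P (i-1)` for `2 ≤ i ≤ n-2`. Because each `t i` is an involution, consecutive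
factors of the alternating product collapse: `(f 1)⁻¹ * f 2 = P 2` and
`(f (i+1))⁻¹ * f (i+2) = (P i)⁻¹ * P (i+2)`, so the product telescopes to `P (n-2) = 1`.
-/

theorem List.prod_reverse_of_forall_mul_self_eq_one {G : Type*} [Group G] {l : List G}
    (hl : ∀ x ∈ l, x * x = 1) : l.reverse.prod = l.prod⁻¹ := by
  rw [prod_reverse_noncomm, map_congr_left fun x hx => inv_eq_of_mul_eq_one_right (hl x hx),
    map_id']

section

variable {G : Type*} [Group G]

def tailProd (t : ℕ → G) (m i : ℕ) : G :=
  ((List.range' (i + 1) (m - i)).map t).prod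

@[simp]
theorem tailProd_self (t : ℕ → G) (m : ℕ) : tailProd t m m = 1 := by
  simp [tailProd]

theorem tailProd_of_lt (t : ℕ → G) {m i : ℕ} (h : i < m) :
    tailProd t m i = t (i + 1) * tailProd t m (i + 1) := by
  rw [tailProd, show m - i = m - (i + 1) + 1 by omega, List.range'_succ]
  rfl

theorem prod_map_range'_eq_tailProd_mul (t : ℕ → G) {m i : ℕ} (h : i ≤ m) :
    ((List.range' (i + 1) (m + 1 - i)).map t).prod = tailProd t m i * t (m + 1) := by
  rw [show m + 1 - i = m - i + 1 by omega, List.range'_1_concat, List.map_append,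
    List.prod_append, show i + 1 + (m - i) = m + 1 by omega]
  simp [tailProd]

theorem prod_map_reverse_range'_eq {t : ℕ → G} {m i : ℕ} (h : i ≤ m)
    (ht : ∀ j, i + 1 ≤ j → j ≤ m + 1 → t j * t j = 1) :
    ((List.range' (i + 1) (m + 1 - i)).reverse.map t).prod = t (m + 1) * (tailProd t m i)⁻¹ := by
  rw [List.map_reverse, List.prod_reverse_of_forall_mul_self_eq_one,
    prod_map_range'_eq_tailProd_mul t h, mul_inv_rev,
    inv_eq_of_mul_eq_one_right (ht (m + 1) (by omega) le_rfl)]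
  simp only [List.mem_map, List.mem_range'_1]
  rintro _ ⟨j, hj, rfl⟩
  exact ht j hj.1 (by omega)

theorem eq_mul_inv_tailProd_mul_tailProd {t f : ℕ → G} {m i : ℕ}
    (ht : ∀ j, 2 ≤ j → j ≤ m + 1 → t j * t j = 1)
    (hfi : ∀ i, 2 ≤ i → i ≤ m - 1 →
      f i = ((List.range' (i + 1) (m + 1 - i)).reverse.map t).prod * t i *
        ((List.range' (i + 1) (m - i)).map t).prod)
    (hfm : f m = t (m + 1) * t m) (hi : 1 ≤ i) (him : i < m) :
    f (i + 1) = t (m + 1) * (tailProd t m (i + 1))⁻¹ * tailProd t m i := by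
  rcases (Nat.succ_le_of_lt him).eq_or_lt with hm | hm
  · subst hm
    simp [hfm, tailProd_of_lt t him]
  · rw [hfi (i + 1) (by omega) (by omega),
      prod_map_reverse_range'_eq (by omega) fun j hj => ht j (by omega), mul_assoc]
    exact congrArg _ (tailProd_of_lt t (by omega)).symm

-- `y * z⁻¹ * y = u * u * z = z`
theorem inv_mul_eq_of_eq_involution_mul {s x y z u : G} (hu : u * u = 1) (hy : y = u * z) :
    (s * y⁻¹ * x)⁻¹ * (s * z⁻¹ * y) = x⁻¹ * z := by
  have huz : u * (u * z) = z := by rw [← mul_assoc, hu, one_mul]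
  subst hy
  simp only [mul_inv_rev, inv_inv, mul_assoc, inv_mul_cancel_left, mul_inv_cancel_left, huz]

variable {t f : ℕ → G} {m : ℕ} {s : G}

theorem alternating_prod_range'_eq_tailProd
    (ht : ∀ i, 2 ≤ i → i ≤ m → t i * t i = 1)
    (hf1 : f 1 = s * (tailProd t m 1)⁻¹)
    (hf : ∀ i, 1 ≤ i → i < m → f (i + 1) = s * (tailProd t m (i + 1))⁻¹ * tailProd t m i) :
    ∀ k, 2 * k + 2 ≤ m → ((List.range' 1 (2 * k + 2)).map
      (fun i => if i % 2 = 1 then (f i)⁻¹ else f i)).prod = tailProd t m (2 * k + 2) := by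
  have hpair : ∀ i x, i + 2 ≤ m → f (i + 1) = s * (tailProd t m (i + 1))⁻¹ * x →
      (f (i + 1))⁻¹ * f (i + 2) = x⁻¹ * tailProd t m (i + 2) := fun i x hi hx => by
    rw [hx, hf (i + 1) (by omega) (by omega)]
    exact inv_mul_eq_of_eq_involution_mul (ht (i + 2) (by omega) hi) (tailProd_of_lt t (by omega))
  intro k
  induction k with
  | zero =>
    intro hm
    simpa [List.range'_succ] using hpair 0 1 hm (by simpa using hf1)
  | succ k ih =>
    intro hm
    rw [show 2 * (k + 1) + 2 = 2 * k + 2 + 1 + 1 by omega, List.range'_1_concat,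
      List.range'_1_concat, List.map_append, List.map_append, List.prod_append,
      List.prod_append, ih (by omega)]
    have hodd : (1 + (2 * k + 2)) % 2 = 1 := by omega
    have heven : ¬ (1 + (2 * k + 2 + 1)) % 2 = 1 := by omega
    simp only [List.map_singleton, List.prod_singleton, hodd, heven, if_true, if_false, mul_assoc]
    rw [show 1 + (2 * k + 2) = 2 * k + 2 + 1 by omega,
      show 1 + (2 * k + 2 + 1) = 2 * k + 2 + 2 by omega,
      hpair (2 * k + 2) _ (by omega) (hf (2 * k + 2) (by omega) (by omega)), mul_inv_cancel_left]

theorem alternating_prod_range'_eq_one (hm : Even m)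
    (ht : ∀ i, 2 ≤ i → i ≤ m → t i * t i = 1)
    (hf1 : f 1 = s * (tailProd t m 1)⁻¹)
    (hf : ∀ i, 1 ≤ i → i < m → f (i + 1) = s * (tailProd t m (i + 1))⁻¹ * tailProd t m i) :
    ((List.range' 1 m).map (fun i => if i % 2 = 1 then (f i)⁻¹ else f i)).prod = 1 := by
  obtain rfl | ⟨k, rfl⟩ : m = 0 ∨ ∃ k, m = 2 * k + 2 := by
    obtain ⟨k, rfl⟩ := hm
    rcases k with _ | k
    · exact .inl rfl
    · exact .inr ⟨k, by omega⟩
  · rfl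
  · rw [alternating_prod_range'_eq_tailProd ht hf1 hf k le_rfl, tailProd_self]

end

theorem alternating_product_of_f_eq_one_general {G : Type*} [Group G] (n : ℕ)
    (hEven : Even n) (t f : ℕ → G)
    (ht : ∀ i, 1 ≤ i → i ≤ n - 1 → t i * t i = 1)
    (hf1 : f 1 = ((List.range' 2 (n - 2)).reverse.map t).prod)
    (hfi : ∀ i, 2 ≤ i → i ≤ n - 3 →
      f i = ((List.range' (i + 1) (n - 1 - i)).reverse.map t).prod * t i *
        ((List.range' (i + 1) (n - 2 - i)).map t).prod)
    (hfn2 : f (n - 2) = t (n - 1) * t (n - 2)) :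
    ((List.range' 1 (n - 2)).map (fun i => if i % 2 = 1 then (f i)⁻¹ else f i)).prod = 1 := by
  obtain hn | ⟨m, hm, rfl⟩ :=
    (le_or_gt n 2).imp_right fun h => (⟨n - 2, by omega, by omega⟩ : ∃ m, 1 ≤ m ∧ n = m + 2)
  · simp [Nat.sub_eq_zero_of_le hn]
  have ht' : ∀ i, 2 ≤ i → i ≤ m + 1 → t i * t i = 1 := fun i hi => ht i (by omega)
  -- `hf1`, `hfi`, `hfn2` have the required shapes up to reducing `m + 2 - k` definitionally.
  exact alternating_prod_range'_eq_one (by simpa [Nat.even_add] using hEven)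
    (fun i hi him => ht' i hi (by omega))
    (hf1.trans (prod_map_reverse_range'_eq (i := 1) hm fun j hj => ht' j hj))
    fun i => eq_mul_inv_tailProd_mul_tailProd ht' hfi hfn2

/-- Let `n ≥ 6` be even, `G` a group, `t 1, …, t (n-1)` involutions with
`t 1 = t (n-1)`.  With `f 1 = t (n-1) ⋯ t 2`,
`f i = t (n-1) ⋯ t (i+1) * t i * t (i+1) ⋯ t (n-2)` for `2 ≤ i ≤ n-3`, and
`f (n-2) = t (n-1) * t (n-2)`, the alternating product
`f 1⁻¹ * f 2 * f 3⁻¹ * ⋯ * f (n-3)⁻¹ * f (n-2)` (with `f i` inverted for odd `i`)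
equals `1`. -/
theorem alternating_product_of_f_eq_one {G : Type*} [Group G] (n : ℕ) (hn : 6 ≤ n)
    (hEven : Even n) (t f : ℕ → G)
    (ht : ∀ i, 1 ≤ i → i ≤ n - 1 → t i * t i = 1)
    (ht1 : t 1 = t (n - 1))
    (hf1 : f 1 = ((List.range' 2 (n - 2)).reverse.map t).prod)
    (hfi : ∀ i, 2 ≤ i → i ≤ n - 3 →
      f i = ((List.range' (i + 1) (n - 1 - i)).reverse.map t).prod * t i *
        ((List.range' (i + 1) (n - 2 - i)).map t).prod)
    (hfn2 : f (n - 2) = t (n - 1) * t (n - 2)) :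
    ((List.range' 1 (n - 2)).map (fun i => if i % 2 = 1 then (f i)⁻¹ else f i)).prod = 1 :=
  alternating_product_of_f_eq_one_general n hEven t f ht hf1 hfi hfn2
end

section
/- Define c_n := t_{n−1}, cᵢ := vᵢ·sᵢ·vᵢ⁻¹ for 2 ≤ i ≤ n−1, and c₁ := v₁·s₁. Then c_n·c_{n−1}·c_{n−2} ⋯ c₂·c₁ = t_{n−1}·(g_{n−1}⁻¹·g_{n−2}·g_{n−3}⁻¹ ⋯ g₂·g₁⁻¹)·t_{n−1}. In particular, c_n·c_{n−1} ⋯ c₁ = 1 if and only if g_{n−1}⁻¹·g_{n−2}·g_{n−3}⁻¹ ⋯ g₂·g₁⁻¹ = 1. -/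
/-!
Write `T i = t (n-1) ⋯ t i` (so `T n = 1`) and `f i` for `g i⁻¹` (`i` odd) or `g i` (`i` even).
Then `v i = T i` for even `i` and `v i = T (i+1)` for odd `i`, and since the `t i`, `s i` are
involutions every factor becomes a telescoping term `c i = T (i+1) * f i * (T i)⁻¹`,
while `c 1 = T 2 * f 1 * t 1`. The product collapses to `t (n-1) * (f (n-1) ⋯ f 1) * t 1`,
and `t 1 = t (n-1)` is an involution, so the product is trivial iff the inner one is.
-/

section Telescope

variable {G : Type*}

theorem prod_map_reverse_range'_succ [Monoid G] (f : ℕ → G) (a k : ℕ) :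
    ((List.range' a (k + 1)).reverse.map f).prod =
      ((List.range' (a + 1) k).reverse.map f).prod * f a := by
  simp [List.range'_succ]

theorem prod_map_reverse_range'_concat [Monoid G] (f : ℕ → G) (a k : ℕ) :
    ((List.range' a (k + 1)).reverse.map f).prod =
      f (a + k) * ((List.range' a k).reverse.map f).prod := by
  simp [List.range'_concat]

theorem prod_map_reverse_range'_conj_telescope [Group G] (x y : ℕ → G) (a k : ℕ) :
    ((List.range' a k).reverse.map fun i => x (i + 1) * y i * (x i)⁻¹).prod =
      x (a + k) * ((List.range' a k).reverse.map y).prod * (x a)⁻¹ := by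
  induction k generalizing a with
  | zero => simp
  | succ k ih =>
    rw [prod_map_reverse_range'_succ, ih, prod_map_reverse_range'_succ,
      show a + 1 + k = a + (k + 1) by omega]
    group

theorem prod_map_reverse_range'_one_eq_of_conj_telescope [Group G] {c x y : ℕ → G} {z : G}
    {n : ℕ} (hn : 2 ≤ n) (hc : ∀ i ∈ List.range' 2 (n - 2), c i = x (i + 1) * y i * (x i)⁻¹)
    (hc1 : c 1 = x 2 * y 1 * z) :
    ((List.range' 1 n).reverse.map c).prod =
      c n * x n * ((List.range' 1 (n - 1)).reverse.map y).prod * z := by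
  obtain ⟨k, rfl⟩ : ∃ k, n = k + 2 := ⟨n - 2, by omega⟩
  rw [Nat.add_sub_cancel] at hc
  rw [prod_map_reverse_range'_concat, show k + 2 - 1 = k + 1 by omega,
    prod_map_reverse_range'_succ, prod_map_reverse_range'_succ,
    List.map_congr_left fun i hi => hc i (List.mem_reverse.mp hi),
    prod_map_reverse_range'_conj_telescope, hc1, show 1 + (k + 1) = k + 2 by omega,
    show 1 + 1 + k = k + 2 by omega]
  group

end Telescope

section DescProd

variable {G : Type*} [Group G]

/-- `descProd t i n = t (n - 1) * t (n - 2) * ⋯ * t i`. -/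
def descProd (t : ℕ → G) (i n : ℕ) : G :=
  ((List.range' i (n - i)).reverse.map t).prod

theorem descProd_self (t : ℕ → G) (n : ℕ) : descProd t n n = 1 := by
  simp [descProd]

theorem descProd_of_lt (t : ℕ → G) {i n : ℕ} (h : i < n) :
    descProd t i n = descProd t (i + 1) n * t i := by
  rw [descProd, descProd, show n - i = n - (i + 1) + 1 by omega, prod_map_reverse_range'_succ]

theorem eq_descProd_of_parity {t v : ℕ → G} {n : ℕ} (hEven : Even n) (hvn1 : v (n - 1) = 1)
    (hvi : ∀ i, 1 ≤ i → i ≤ n - 2 →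
      v i = if i % 2 = 0 then ((List.range' i (n - i)).reverse.map t).prod
        else ((List.range' (i + 1) (n - 1 - i)).reverse.map t).prod)
    {i : ℕ} (h1 : 1 ≤ i) (h2 : i ≤ n - 1) :
    v i = if i % 2 = 0 then descProd t i n else descProd t (i + 1) n := by
  obtain h2 | rfl := Nat.lt_or_eq_of_le h2
  · rw [hvi i h1 (by omega), descProd, descProd, show n - 1 - i = n - (i + 1) by omega]
  · rw [hvn1, if_neg (by grind), show n - 1 + 1 = n by omega, descProd_self]

theorem conj_eq_descProd_mul_alternating_mul_inv {t s g : ℕ → G} {n i : ℕ} {w : G}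
    (hw : w = if i % 2 = 0 then descProd t i n else descProd t (i + 1) n) (hi : i < n)
    (ht : t i * t i = 1) (hs : s i * s i = 1) (hg : g i = t i * s i) :
    w * s i * w⁻¹ =
      descProd t (i + 1) n * (if i % 2 = 1 then (g i)⁻¹ else g i) * (descProd t i n)⁻¹ := by
  rw [descProd_of_lt t hi, hg]
  rcases Nat.mod_two_eq_zero_or_one i with hi2 | hi2
  · rw [hw, if_pos hi2, if_neg (by omega), descProd_of_lt t hi]
    group
  · rw [hw, if_neg (by omega), if_pos hi2, mul_inv_rev, mul_inv_rev,
      inv_eq_of_mul_eq_one_right hs, inv_eq_of_mul_eq_one_right ht]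
    simp [mul_assoc, ← mul_assoc (t i) (t i), ht]

end DescProd

theorem c_product_eq_conjugated_alternating_g_product_general {G : Type*} [Group G] (n : ℕ)
    (hn : 6 ≤ n) (hEven : Even n) (t s v g c : ℕ → G)
    (ht : ∀ i, 1 ≤ i → i ≤ n - 1 → t i * t i = 1)
    (ht1 : t 1 = t (n - 1))
    (hs : ∀ i, 1 ≤ i → i ≤ n - 1 → s i * s i = 1)
    (hvn1 : v (n - 1) = 1)
    (hvi : ∀ i, 1 ≤ i → i ≤ n - 2 →
      v i = if i % 2 = 0 then ((List.range' i (n - i)).reverse.map t).prod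
        else ((List.range' (i + 1) (n - 1 - i)).reverse.map t).prod)
    (hg : ∀ i, 1 ≤ i → i ≤ n - 1 → g i = t i * s i)
    (hcn : c n = t (n - 1))
    (hci : ∀ i, 2 ≤ i → i ≤ n - 1 → c i = v i * s i * (v i)⁻¹)
    (hc1 : c 1 = v 1 * s 1) :
    ((List.range' 1 n).reverse.map c).prod =
      t (n - 1) * ((List.range' 1 (n - 1)).reverse.map
        (fun i => if i % 2 = 1 then (g i)⁻¹ else g i)).prod * t (n - 1) ∧
    (((List.range' 1 n).reverse.map c).prod = 1 ↔
      ((List.range' 1 (n - 1)).reverse.map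
        (fun i => if i % 2 = 1 then (g i)⁻¹ else g i)).prod = 1) := by
  set f : ℕ → G := fun i => if i % 2 = 1 then (g i)⁻¹ else g i
  have hc : ∀ i ∈ List.range' 2 (n - 2), c i = descProd t (i + 1) n * f i * (descProd t i n)⁻¹ := by
    intro i hi
    rw [List.mem_range'_1] at hi
    rw [hci i (by omega) (by omega)]
    exact conj_eq_descProd_mul_alternating_mul_inv
      (eq_descProd_of_parity hEven hvn1 hvi (by omega) (by omega)) (by omega)
      (ht i (by omega) (by omega)) (hs i (by omega) (by omega)) (hg i (by omega) (by omega))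
  have hc1' : c 1 = descProd t 2 n * f 1 * t 1 := by
    rw [hc1, eq_descProd_of_parity hEven hvn1 hvi le_rfl (by omega), if_neg (by omega)]
    simp only [f, if_pos (show 1 % 2 = 1 from rfl), hg 1 le_rfl (by omega), mul_inv_rev,
      mul_assoc, inv_mul_cancel, mul_one, inv_eq_of_mul_eq_one_right (hs 1 le_rfl (by omega))]
  have hprod : ((List.range' 1 n).reverse.map c).prod
      = t (n - 1) * ((List.range' 1 (n - 1)).reverse.map f).prod * t (n - 1) := by
    rw [prod_map_reverse_range'_one_eq_of_conj_telescope (x := (descProd t · n)) (by omega) hc hc1',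
      hcn, descProd_self, mul_one, ht1]
  refine ⟨hprod, ?_⟩
  rw [hprod]
  nth_rw 2 [← inv_eq_of_mul_eq_one_right (ht (n - 1) (by omega) le_rfl)]
  exact conj_eq_one_iff

/-- Let `n ≥ 6` be even, `G` a group, `t 1, …, t (n-1)` and
`s 1, …, s (n-1)` involutions with `t 1 = t (n-1)`, let `v` be as in the paper
(`v n = v (n-1) = 1`; for `1 ≤ i ≤ n-2`, `v i = t (n-1) ⋯ t (i+1) * t i` for even `i`
and `v i = t (n-1) ⋯ t (i+1)` for odd `i`), and set `g i = t i * s i`.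
Define `c n = t (n-1)`, `c i = v i * s i * (v i)⁻¹` for `2 ≤ i ≤ n-1`, `c 1 = v 1 * s 1`.
Then `c n * c (n-1) * ⋯ * c 1
  = t (n-1) * ((g (n-1))⁻¹ * g (n-2) * (g (n-3))⁻¹ * ⋯ * g 2 * (g 1)⁻¹) * t (n-1)`;
in particular the left product is `1` iff
`(g (n-1))⁻¹ * g (n-2) * ⋯ * g 2 * (g 1)⁻¹ = 1`. -/
theorem c_product_eq_conjugated_alternating_g_product {G : Type*} [Group G] (n : ℕ)
    (hn : 6 ≤ n) (hEven : Even n) (t s v g c : ℕ → G)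
    (ht : ∀ i, 1 ≤ i → i ≤ n - 1 → t i * t i = 1)
    (ht1 : t 1 = t (n - 1))
    (hs : ∀ i, 1 ≤ i → i ≤ n - 1 → s i * s i = 1)
    (hvn : v n = 1) (hvn1 : v (n - 1) = 1)
    (hvi : ∀ i, 1 ≤ i → i ≤ n - 2 →
      v i = if i % 2 = 0 then ((List.range' i (n - i)).reverse.map t).prod
        else ((List.range' (i + 1) (n - 1 - i)).reverse.map t).prod)
    (hg : ∀ i, 1 ≤ i → i ≤ n - 1 → g i = t i * s i)
    (hcn : c n = t (n - 1))
    (hci : ∀ i, 2 ≤ i → i ≤ n - 1 → c i = v i * s i * (v i)⁻¹)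
    (hc1 : c 1 = v 1 * s 1) :
    ((List.range' 1 n).reverse.map c).prod =
      t (n - 1) * ((List.range' 1 (n - 1)).reverse.map
        (fun i => if i % 2 = 1 then (g i)⁻¹ else g i)).prod * t (n - 1) ∧
    (((List.range' 1 n).reverse.map c).prod = 1 ↔
      ((List.range' 1 (n - 1)).reverse.map
        (fun i => if i % 2 = 1 then (g i)⁻¹ else g i)).prod = 1) :=
  c_product_eq_conjugated_alternating_g_product_general n hn hEven t s v g c ht ht1 hs hvn1 hvi hg
    hcn hci hc1
end

section
/- Let t₂, …, t_{n−1} and t′₂, …, t′_{n−1} be two families of elements of G with tᵢ² = 1 and (t′ᵢ)² = 1 for all i, and with t_{n−1} = t′_{n−1}. If the associated elements satisfy f_{n−2} = f′_{n−2} and fᵢ = f′ᵢ for all 2 ≤ i ≤ n−3 (where f′ᵢ is defined from the family t′ by the same formulas as fᵢ is from t), then tᵢ = t′ᵢ for all 2 ≤ i ≤ n−1. Explicitly, each tᵢ is recovered as tᵢ = (t_{n−1}·t_{n−2} ⋯ t_{i+1})⁻¹·fᵢ·(t_{i+1} ⋯ t_{n−3}·t_{n−2})⁻¹. -/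
/-!
Each `fᵢ` has the form `Pᵢ * tᵢ * Qᵢ`, where `Pᵢ` and `Qᵢ` are products of the `tⱼ` with
`i < j ≤ n - 1` only, and `f_{n-2} = t_{n-1} * t_{n-2}`. Hence, by downward induction from
`t_{n-1} = t'_{n-1}`, the words `Pᵢ, Qᵢ` agree for `t` and `t'`, and cancelling them in
`fᵢ = f'ᵢ` gives `tᵢ = t'ᵢ`. The explicit formula is the same sandwich solved for `tᵢ`.
-/

theorem eq_of_prod_map_mul_mul_prod_map_eq {ι G : Type*} [Group G] {t t' : ι → G}
    {l₁ l₂ : List ι} (h₁ : ∀ j ∈ l₁, t j = t' j) (h₂ : ∀ j ∈ l₂, t j = t' j) {i : ι}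
    (h : (l₁.map t).prod * t i * (l₂.map t).prod = (l₁.map t').prod * t' i * (l₂.map t').prod) :
    t i = t' i := by
  rw [List.map_congr_left h₁, List.map_congr_left h₂] at h
  exact mul_left_cancel (mul_right_cancel h)

theorem t_determined_by_f_general {G : Type*} [Group G] (n : ℕ)
    (t t' f f' : ℕ → G)
    (htop : t (n - 1) = t' (n - 1))
    (hfi : ∀ i, 2 ≤ i → i ≤ n - 3 →
      f i = ((List.range' (i + 1) (n - 1 - i)).reverse.map t).prod * t i *
        ((List.range' (i + 1) (n - 2 - i)).map t).prod)
    (hfn2 : f (n - 2) = t (n - 1) * t (n - 2))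
    (hfi' : ∀ i, 2 ≤ i → i ≤ n - 3 →
      f' i = ((List.range' (i + 1) (n - 1 - i)).reverse.map t').prod * t' i *
        ((List.range' (i + 1) (n - 2 - i)).map t').prod)
    (hfn2' : f' (n - 2) = t' (n - 1) * t' (n - 2))
    (heqn2 : f (n - 2) = f' (n - 2))
    (heq : ∀ i, 2 ≤ i → i ≤ n - 3 → f i = f' i) :
    (∀ i, 2 ≤ i → i ≤ n - 1 → t i = t' i) ∧
    (∀ i, 2 ≤ i → i ≤ n - 2 →
      t i = (((List.range' (i + 1) (n - 1 - i)).reverse.map t).prod)⁻¹ * f i *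
        (((List.range' (i + 1) (n - 2 - i)).map t).prod)⁻¹) := by
  refine ⟨fun i => Nat.strong_decreasing_induction
    (P := fun i => 2 ≤ i → i ≤ n - 1 → t i = t' i) ⟨n - 1, fun m hm _ hm' => by omega⟩ ?_ i, ?_⟩
  · intro i ih h2 hle
    have agree : ∀ j ∈ List.range' (i + 1) (n - 1 - i), t j = t' j := fun j hj => by
      rw [List.mem_range'_1] at hj
      exact ih j (by omega) (by omega) (by omega)
    rcases lt_trichotomy i (n - 2) with hlt | rfl | hgt
    · refine eq_of_prod_map_mul_mul_prod_map_eq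
        (fun j hj => agree j (List.mem_reverse.mp hj)) (l₂ := List.range' (i + 1) (n - 2 - i))
        (fun j hj => agree j (by rw [List.mem_range'_1] at hj ⊢; omega)) ?_
      rw [← hfi i h2 (by omega), ← hfi' i h2 (by omega), heq i h2 (by omega)]
    · rw [hfn2, hfn2', htop] at heqn2
      exact mul_left_cancel heqn2
    · obtain rfl : i = n - 1 := by omega
      exact htop
  · intro i h2 hle
    rcases hle.lt_or_eq with hlt | rfl
    · rw [hfi i h2 (by omega)]
      group
    · rw [show n - 2 + 1 = n - 1 by omega, show n - 1 - (n - 2) = 1 by omega, Nat.sub_self, hfn2]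
      simp

/-- Let `n ≥ 6` be even and `G` a group.  Let `t 2, …, t (n-1)` and
`t' 2, …, t' (n-1)` be two families of involutions in `G` with `t (n-1) = t' (n-1)`, and
let `f` (resp. `f'`) be defined from `t` (resp. `t'`) by
`f i = t (n-1) ⋯ t (i+1) * t i * t (i+1) ⋯ t (n-2)` for `2 ≤ i ≤ n-3` and
`f (n-2) = t (n-1) * t (n-2)`.  If `f (n-2) = f' (n-2)` and `f i = f' i` for all
`2 ≤ i ≤ n-3`, then `t i = t' i` for all `2 ≤ i ≤ n-1`; explicitly, each `t i` is
recovered as `t i = (t (n-1) ⋯ t (i+1))⁻¹ * f i * (t (i+1) ⋯ t (n-2))⁻¹`. -/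
theorem t_determined_by_f {G : Type*} [Group G] (n : ℕ) (hn : 6 ≤ n) (hEven : Even n)
    (t t' f f' : ℕ → G)
    (ht : ∀ i, 2 ≤ i → i ≤ n - 1 → t i * t i = 1)
    (ht' : ∀ i, 2 ≤ i → i ≤ n - 1 → t' i * t' i = 1)
    (htop : t (n - 1) = t' (n - 1))
    (hfi : ∀ i, 2 ≤ i → i ≤ n - 3 →
      f i = ((List.range' (i + 1) (n - 1 - i)).reverse.map t).prod * t i *
        ((List.range' (i + 1) (n - 2 - i)).map t).prod)
    (hfn2 : f (n - 2) = t (n - 1) * t (n - 2))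
    (hfi' : ∀ i, 2 ≤ i → i ≤ n - 3 →
      f' i = ((List.range' (i + 1) (n - 1 - i)).reverse.map t').prod * t' i *
        ((List.range' (i + 1) (n - 2 - i)).map t').prod)
    (hfn2' : f' (n - 2) = t' (n - 1) * t' (n - 2))
    (heqn2 : f (n - 2) = f' (n - 2))
    (heq : ∀ i, 2 ≤ i → i ≤ n - 3 → f i = f' i) :
    (∀ i, 2 ≤ i → i ≤ n - 1 → t i = t' i) ∧
    (∀ i, 2 ≤ i → i ≤ n - 2 →
      t i = (((List.range' (i + 1) (n - 1 - i)).reverse.map t).prod)⁻¹ * f i *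
        (((List.range' (i + 1) (n - 2 - i)).map t).prod)⁻¹) :=
  t_determined_by_f_general n t t' f f' htop hfi hfn2 hfi' hfn2' heqn2 heq
end

section
/- Let k₂, k₃ > 0 and let b₃, e₃ be real numbers with 0 < b₃ < e₃. Then there exists a unique pair (t₂, t₃) of positive real numbers such that, setting b₂ := t₂ and e₂ := (1 + k₂⁻²)·t₂, the following hold: 0 < b₂ < e₂ < b₃, b₂ ≠ t₃, e₂ ≠ t₃, R_{k₃,t₃}(b₂) = b₃, and R_{k₃,t₃}(e₂) = e₃. (Equivalently: the reflections in the points p₂ = t₂·(1 + i/k₂) and p₃ = t₃·(1 + i/k₃) of the upper half-plane carry the boundary points ∞ ↦ b₂ ↦ b₃ and 0 ↦ e₂ ↦ e₃ respectively, and the boundary cycle ∞, 0, b₂, e₂, b₃, e₃ is positively ordered.) -/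
/-- The boundary action on `ℝ` of the hyperbolic reflection of the upper half-plane in
the point `t·(1 + i/k)`: `R_{k,t}(x) = t − t²/(k²·(x − t))` (for `x ≠ t`). -/
noncomputable def Rmob (k t x : ℝ) : ℝ := t - t ^ 2 / (k ^ 2 * (x - t))

/-!
Writing `u = t₂`, `v = t₃`, `c = 1 + k₂⁻²` and `K = k₃²`, the equation `R_{k₃,v}(x) = y` is
the symmetric relation `K (x - v) (v - y) = v²`, so `R_{k₃,v}` is an involution exchanging the
two sides of `v`. Eliminating `u` from `K (u - v) (v - b₃) = v²` and `K (c u - v) (v - e₃) = v²`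
leaves a quadratic equation for `v` alone, whose left side is positive at `0` and negative at
`b₃`: it has exactly one root in `(0, b₃)`, and that root determines `u = R_{k₃,v}(b₃)`. The
ordering `0 < u < c u < v < b₃` is read off from the signs in the two relations.
-/

open Set

theorem eq_of_quadratic_eq_zero_of_lt {a β γ b v w : ℝ} (ha : 0 < a)
    (hb : a * b ^ 2 + β * b + γ < 0) (hv : a * v ^ 2 + β * v + γ = 0)
    (hw : a * w ^ 2 + β * w + γ = 0) (hvb : v < b) (hwb : w < b) : v = w := by
  by_contra hne
  have hfactor : a * b ^ 2 + β * b + γ = a * (b - v) * (b - w) := by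
    refine mul_left_cancel₀ (sub_ne_zero.mpr hne) ?_
    linear_combination (b - w) * hv - (b - v) * hw
  have hbv := sub_pos.mpr hvb
  have hbw := sub_pos.mpr hwb
  have : 0 < a * (b - v) * (b - w) := by positivity
  linarith

section Rmob

variable {k t x y : ℝ}

theorem Rmob_eq_iff (hk : k ≠ 0) (hx : x ≠ t) :
    Rmob k t x = y ↔ k ^ 2 * (x - t) * (t - y) = t ^ 2 := by
  have hden : k ^ 2 * (x - t) ≠ 0 := mul_ne_zero (pow_ne_zero 2 hk) (sub_ne_zero.mpr hx)
  unfold Rmob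
  constructor
  · rintro rfl
    field_simp
    ring
  · intro h
    rw [← h, mul_div_cancel_left₀ _ hden, sub_sub_cancel]

theorem lt_iff_lt_of_mul_eq_sq (ht : t ≠ 0) (h : k ^ 2 * (x - t) * (t - y) = t ^ 2) :
    x < t ↔ t < y := by
  have hprod : 0 < (x - t) * (t - y) := by
    refine pos_of_mul_pos_right (a := k ^ 2) ?_ (sq_nonneg k)
    rw [← mul_assoc, h]
    positivity
  rcases mul_pos_iff.mp hprod with ⟨h₁, h₂⟩ | ⟨h₁, h₂⟩ <;> constructor <;> intro <;> linarith

end Rmob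

/-- Eliminating `u` from `K (u - v) (v - b) = v²` and `K (c u - v) (v - e) = v²`. -/
def reflectionQuadratic (K c b e v : ℝ) : ℝ :=
  K * (c - 1) * (b - v) * (e - v) - v * (c * (e - v) - (b - v))

section reflectionQuadratic

variable {K c b e u v : ℝ}

theorem reflectionQuadratic_eq_zero_of_mul_eq_sq (hv : v ≠ 0)
    (hA : K * (u - v) * (v - b) = v ^ 2) (hB : K * (c * u - v) * (v - e) = v ^ 2) :
    reflectionQuadratic K c b e v = 0 := by
  have h : v * reflectionQuadratic K c b e v = 0 := by
    unfold reflectionQuadratic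
    linear_combination (v - b) * hB - c * (v - e) * hA
  exact (mul_eq_zero.mp h).resolve_left hv

theorem mul_eq_sq_of_reflectionQuadratic_eq_zero (hvb : v ≠ b)
    (hq : reflectionQuadratic K c b e v = 0) (hA : K * (u - v) * (v - b) = v ^ 2) :
    K * (c * u - v) * (v - e) = v ^ 2 := by
  have h : (v - b) * (K * (c * u - v) * (v - e) - v ^ 2) = 0 := by
    unfold reflectionQuadratic at hq
    linear_combination c * (v - e) * hA + v * hq
  exact sub_eq_zero.mp ((mul_eq_zero.mp h).resolve_left (sub_ne_zero.mpr hvb))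

theorem lt_mul_sub_of_reflectionQuadratic_eq_zero (hc : 1 < c) (hv : 0 < v) (hve : v < e)
    (hbe : b < e) (hq : reflectionQuadratic K c b e v = 0) : v < K * (b - v) := by
  have hkey : (c - 1) * (e - v) * (K * (b - v) - v) = v * (e - b) := by
    unfold reflectionQuadratic at hq
    linear_combination hq
  have hpos : 0 < (c - 1) * (e - v) * (K * (b - v) - v) := by
    rw [hkey]
    exact mul_pos hv (sub_pos.mpr hbe)
  have hce : 0 < (c - 1) * (e - v) := mul_pos (sub_pos.mpr hc) (sub_pos.mpr hve)
  exact sub_pos.mp (pos_of_mul_pos_right hpos hce.le)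

theorem existsUnique_reflectionQuadratic_root (hK : 0 < K) (hc : 1 < c) (hb : 0 < b)
    (hbe : b < e) : ∃! v, v ∈ Ioo 0 b ∧ reflectionQuadratic K c b e v = 0 := by
  have hexpand : ∀ x, reflectionQuadratic K c b e x = (c - 1) * (K + 1) * x ^ 2
      + -(K * (c - 1) * (b + e) + c * e - b) * x + K * (c - 1) * b * e := fun x => by
    unfold reflectionQuadratic
    ring
  have hq0 : 0 < reflectionQuadratic K c b e 0 := by
    have : reflectionQuadratic K c b e 0 = K * (c - 1) * b * e := by
      unfold reflectionQuadratic
      ring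
    rw [this]
    exact mul_pos (mul_pos (mul_pos hK (sub_pos.mpr hc)) hb) (hb.trans hbe)
  have hqb : reflectionQuadratic K c b e b < 0 := by
    have : reflectionQuadratic K c b e b = -(b * c * (e - b)) := by
      unfold reflectionQuadratic
      ring
    rw [this, neg_neg_iff_pos]
    exact mul_pos (mul_pos hb (by linarith)) (sub_pos.mpr hbe)
  have hcont : ContinuousOn (reflectionQuadratic K c b e) (Icc 0 b) := by
    unfold reflectionQuadratic
    fun_prop
  obtain ⟨v, hv, hqv⟩ := intermediate_value_Ioo' hb.le hcont ⟨hqb, hq0⟩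
  refine ⟨v, ⟨hv, hqv⟩, fun w ⟨hw, hqw⟩ => ?_⟩
  rw [hexpand] at hqv hqw hqb
  have ha : 0 < (c - 1) * (K + 1) := mul_pos (sub_pos.mpr hc) (by linarith)
  exact eq_of_quadratic_eq_zero_of_lt ha hqb hqw hqv hw.2 hv.2

end reflectionQuadratic

section RmobPair

variable {k c b e u v : ℝ}

theorem Rmob_pair_of_reflectionQuadratic_eq_zero (hk : k ≠ 0) (hc : 1 < c) (hbe : b < e)
    (hv : v ∈ Ioo 0 b) (hq : reflectionQuadratic (k ^ 2) c b e v = 0) :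
    0 < Rmob k v b ∧ c * Rmob k v b < v ∧
      Rmob k v (Rmob k v b) = b ∧ Rmob k v (c * Rmob k v b) = e := by
  set u := Rmob k v b
  have hA : k ^ 2 * (u - v) * (v - b) = v ^ 2 := by
    linear_combination (Rmob_eq_iff hk hv.2.ne').mp rfl
  have hB := mul_eq_sq_of_reflectionQuadratic_eq_zero hv.2.ne hq hA
  have hu : 0 < u := by
    have hkb := lt_mul_sub_of_reflectionQuadratic_eq_zero hc hv.1 (hv.2.trans hbe) hbe hq
    have h : u * (k ^ 2 * (b - v)) = v * (k ^ 2 * (b - v) - v) := by linear_combination -hA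
    have : 0 < u * (k ^ 2 * (b - v)) := by
      rw [h]
      exact mul_pos hv.1 (sub_pos.mpr hkb)
    have hbv := sub_pos.mpr hv.2
    exact pos_of_mul_pos_left this (by positivity)
  have hcuv : c * u < v := (lt_iff_lt_of_mul_eq_sq hv.1.ne' hB).mpr (hv.2.trans hbe)
  have huv : u < v := (lt_mul_left hu hc).trans hcuv
  exact ⟨hu, hcuv, (Rmob_eq_iff hk huv.ne).mpr hA, (Rmob_eq_iff hk hcuv.ne).mpr hB⟩

theorem reflectionQuadratic_eq_zero_of_Rmob_pair (hk : k ≠ 0) (hv : 0 < v) (hu : u < c * u)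
    (hcu : c * u < b) (huv : u ≠ v) (hcuv : c * u ≠ v) (hRu : Rmob k v u = b)
    (hRcu : Rmob k v (c * u) = e) :
    v < b ∧ reflectionQuadratic (k ^ 2) c b e v = 0 ∧ Rmob k v b = u := by
  have hA := (Rmob_eq_iff hk huv).mp hRu
  have hB := (Rmob_eq_iff hk hcuv).mp hRcu
  have hvb : v < b := by
    rcases huv.lt_or_gt with h | h
    · exact (lt_iff_lt_of_mul_eq_sq hv.ne' hA).mp h
    · linarith
  refine ⟨hvb, reflectionQuadratic_eq_zero_of_mul_eq_sq hv.ne' hA hB, ?_⟩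
  rw [Rmob_eq_iff hk hvb.ne']
  linear_combination hA

end RmobPair

/-- Let `k₂, k₃ > 0` and `0 < b₃ < e₃`.  There exists a unique pair
`(t₂, t₃)` of positive reals such that, with `b₂ := t₂` and `e₂ := (1 + k₂⁻²)·t₂`, one has
`0 < b₂ < e₂ < b₃`, `b₂ ≠ t₃`, `e₂ ≠ t₃`, `R_{k₃,t₃}(b₂) = b₃` and `R_{k₃,t₃}(e₂) = e₃`.
(Equivalently: the reflections in `p₂ = t₂(1 + i/k₂)` and `p₃ = t₃(1 + i/k₃)` carry the
boundary points `∞ ↦ b₂ ↦ b₃` and `0 ↦ e₂ ↦ e₃`, and the boundary cycle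
`∞, 0, b₂, e₂, b₃, e₃` is positively ordered.) -/
theorem unique_reflection_pair (k₂ k₃ b₃ e₃ : ℝ)
    (hk₂ : 0 < k₂) (hk₃ : 0 < k₃) (hb₃ : 0 < b₃) (hbe : b₃ < e₃) :
    ∃! p : ℝ × ℝ, 0 < p.1 ∧ 0 < p.2 ∧
      0 < p.1 ∧ p.1 < (1 + k₂⁻¹ ^ 2) * p.1 ∧ (1 + k₂⁻¹ ^ 2) * p.1 < b₃ ∧
      p.1 ≠ p.2 ∧ (1 + k₂⁻¹ ^ 2) * p.1 ≠ p.2 ∧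
      Rmob k₃ p.2 p.1 = b₃ ∧ Rmob k₃ p.2 ((1 + k₂⁻¹ ^ 2) * p.1) = e₃ := by
  set c := 1 + k₂⁻¹ ^ 2
  have hc : 1 < c := lt_add_of_pos_right 1 (by positivity)
  obtain ⟨v, ⟨hv, hq⟩, hv_unique⟩ :=
    existsUnique_reflectionQuadratic_root (pow_pos hk₃ 2) hc hb₃ hbe
  obtain ⟨hu, hcuv, hRu, hRcu⟩ := Rmob_pair_of_reflectionQuadratic_eq_zero hk₃.ne' hc hbe hv hq
  have huc := lt_mul_left hu hc
  refine ⟨(Rmob k₃ v b₃, v), ⟨hu, hv.1, hu, huc, hcuv.trans hv.2, (huc.trans hcuv).ne,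
    hcuv.ne, hRu, hRcu⟩, ?_⟩
  rintro ⟨u, w⟩ ⟨-, hw, -, huc, hcub, huw, hcuw, hRu, hRcu⟩
  obtain ⟨hwb, hqw, hRb⟩ :=
    reflectionQuadratic_eq_zero_of_Rmob_pair hk₃.ne' hw huc hcub huw hcuw hRu hRcu
  obtain rfl := hv_unique w ⟨⟨hw, hwb⟩, hqw⟩
  exact Prod.ext hRb.symm rfl
end

section
/- Let k₂, k₃ > 0 and let b, e be real numbers with 0 < b < e. Then the quadratic equation (1 + k₃²)·u² + u + (1 − b/e)·(k₃²·u − k₂²·u − k₂²) = 0 possesses exactly one solution u > 0. -/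
/-! Collecting powers of `u`, the equation reads `a u² + b' u + c = 0` with leading coefficient
`a = 1 + k₃² > 0` and constant term `c = -(1 - b/e) k₂² < 0`. Such a quadratic has exactly one
positive root: the roots have product `c / a < 0`. -/

theorem exists_pos_quadratic_root {a b c : ℝ} (ha : 0 < a) (hc : c < 0) :
    ∃ x : ℝ, 0 < x ∧ a * x ^ 2 + b * x + c = 0 := by
  set s := √(discrim a b c)
  have hs : discrim a b c = s * s := (Real.mul_self_sqrt (by unfold discrim; nlinarith)).symm
  have hbs : b < s := Real.lt_sqrt_of_sq_lt (by unfold discrim; nlinarith)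
  refine ⟨(-b + s) / (2 * a), by apply div_pos <;> linarith, ?_⟩
  have hroot := (quadratic_eq_zero_iff ha.ne' hs ((-b + s) / (2 * a))).mpr (Or.inl rfl)
  linear_combination hroot

theorem pos_quadratic_root_unique {a b c x y : ℝ} (ha : 0 < a) (hc : c < 0)
    (hx : 0 < x) (hy : 0 < y) (hfx : a * x ^ 2 + b * x + c = 0)
    (hfy : a * y ^ 2 + b * y + c = 0) : x = y := by
  -- `x (a x + b) = -c > 0` forces `a x + b > 0`, so the second factor below is positive.
  have hxb : 0 < a * x + b := by
    by_contra! h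
    nlinarith [mul_nonpos_of_nonneg_of_nonpos hx.le h]
  have hfactor : (x - y) * (a * (x + y) + b) = 0 := by linear_combination hfx - hfy
  have hpos : a * (x + y) + b ≠ 0 := by nlinarith [mul_pos ha hy]
  linarith [(mul_eq_zero.mp hfactor).resolve_right hpos]

theorem existsUnique_pos_quadratic_root {a b c : ℝ} (ha : 0 < a) (hc : c < 0) :
    ∃! x : ℝ, 0 < x ∧ a * x ^ 2 + b * x + c = 0 := by
  obtain ⟨x, hx, hfx⟩ := exists_pos_quadratic_root (b := b) ha hc
  exact ⟨x, ⟨hx, hfx⟩, fun y ⟨hy, hfy⟩ => pos_quadratic_root_unique ha hc hy hx hfy hfx⟩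

theorem quadratic_unique_positive_solution_general (k₂ k₃ b e : ℝ)
    (hk₂ : 0 < k₂) (hb : 0 < b) (hbe : b < e) :
    ∃! u : ℝ, 0 < u ∧
      (1 + k₃ ^ 2) * u ^ 2 + u + (1 - b / e) * (k₃ ^ 2 * u - k₂ ^ 2 * u - k₂ ^ 2) = 0 := by
  set t := 1 - b / e
  have ht : 0 < t := sub_pos.mpr ((div_lt_one (hb.trans hbe)).mpr hbe)
  have hcollect : ∀ u : ℝ,
      (1 + k₃ ^ 2) * u ^ 2 + u + t * (k₃ ^ 2 * u - k₂ ^ 2 * u - k₂ ^ 2)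
        = (1 + k₃ ^ 2) * u ^ 2 + (1 + t * (k₃ ^ 2 - k₂ ^ 2)) * u + -(t * k₂ ^ 2) := by
    intro u; ring
  simp_rw [hcollect]
  exact existsUnique_pos_quadratic_root (by positivity) (neg_neg_of_pos (by positivity))

/-- For `k₂, k₃ > 0` and `0 < b < e`, the quadratic equation
`(1 + k₃²)·u² + u + (1 − b/e)·(k₃²·u − k₂²·u − k₂²) = 0` has exactly one solution
`u > 0`. -/
theorem quadratic_unique_positive_solution (k₂ k₃ b e : ℝ)
    (hk₂ : 0 < k₂) (hk₃ : 0 < k₃) (hb : 0 < b) (hbe : b < e) :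
    ∃! u : ℝ, 0 < u ∧
      (1 + k₃ ^ 2) * u ^ 2 + u + (1 - b / e) * (k₃ ^ 2 * u - k₂ ^ 2 * u - k₂ ^ 2) = 0 :=
  quadratic_unique_positive_solution_general k₂ k₃ b e hk₂ hb hbe
end

section
/- Let b, e, k₂, k₃, k₄ be real numbers with 0 < b < e and k₂, k₃, k₄ > 0. Then for every v > 0 the cubic equation (e·(1 + k₄²)/(e − b))·v·w·(w − v) + (e/(e − b) + k₄²)·w·(w − v) + (1 + k₂² + k₃²)·(v + 1)·(w − v) − k₂²·k₃²·v·(v + 1) = 0 admits exactly one solution w with w > v. -/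
/-! On `w > v` the cubic factors as `(α w + β) (w - v) - d` with `α = e(1+k₄²)v/(e-b) + e/(e-b) + k₄²`,
`β = (1+k₂²+k₃²)(v+1)` and `d = k₂²k₃² v (v+1)`. Both factors are positive and increasing there, so the
product increases strictly from `0` at `w = v` without bound, and meets the level `d > 0` exactly once. -/

open Set

section

variable {α β v : ℝ}

theorem strictMonoOn_linear_mul_sub (hα : 0 ≤ α) (hβ : 0 < α * v + β) :
    StrictMonoOn (fun w => (α * w + β) * (w - v)) (Ici v) := by
  intro x hx y _ hxy
  have hx' : v ≤ x := hx
  have hlin : α * x + β ≤ α * y + β := by nlinarith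
  have hpos : 0 < α * y + β := by nlinarith
  calc (α * x + β) * (x - v) ≤ (α * y + β) * (x - v) := by nlinarith
    _ < (α * y + β) * (y - v) := by nlinarith

theorem existsUnique_gt_linear_mul_sub_eq (hα : 0 ≤ α) (hβ : 0 < α * v + β) {d : ℝ} (hd : 0 < d) :
    ∃! w, v < w ∧ (α * w + β) * (w - v) = d := by
  set h : ℝ → ℝ := fun w => (α * w + β) * (w - v)
  have hmono : StrictMonoOn h (Ici v) := strictMonoOn_linear_mul_sub hα hβ
  set w₀ := v + d / (α * v + β)
  have hvw₀ : v ≤ w₀ := le_add_of_nonneg_right (div_pos hd hβ).le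
  have hw₀ : d ≤ h w₀ := by
    have hstep : α * v + β ≤ α * w₀ + β := by nlinarith
    calc d = (α * v + β) * (w₀ - v) := by simp only [w₀]; field_simp; ring
      _ ≤ h w₀ := mul_le_mul_of_nonneg_right hstep (sub_nonneg.2 hvw₀)
  have hcont : ContinuousOn h (Icc v w₀) := by fun_prop
  have hv : h v = 0 := by simp only [h, sub_self, mul_zero]
  obtain ⟨w, ⟨hvw, -⟩, hw⟩ := intermediate_value_Ioc hvw₀ hcont ⟨hv ▸ hd, hw₀⟩
  refine ⟨w, ⟨hvw, hw⟩, fun y ⟨hvy, hy⟩ => ?_⟩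
  exact hmono.injOn hvy.le hvw.le (hy.trans hw.symm)

end

theorem cubic_unique_solution_gt_general (b e k₂ k₃ k₄ : ℝ)
    (hb : 0 < b) (hbe : b < e) (hk₂ : 0 < k₂) (hk₃ : 0 < k₃) :
    ∀ v : ℝ, 0 < v → ∃! w : ℝ, v < w ∧
      e * (1 + k₄ ^ 2) / (e - b) * v * w * (w - v) + (e / (e - b) + k₄ ^ 2) * w * (w - v) +
        (1 + k₂ ^ 2 + k₃ ^ 2) * (v + 1) * (w - v) - k₂ ^ 2 * k₃ ^ 2 * v * (v + 1) = 0 := by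
  intro v hv
  have heb : 0 < e - b := sub_pos.2 hbe
  have he : 0 < e := hb.trans hbe
  set α := e * (1 + k₄ ^ 2) / (e - b) * v + (e / (e - b) + k₄ ^ 2)
  set β := (1 + k₂ ^ 2 + k₃ ^ 2) * (v + 1)
  have hα : 0 ≤ α := by positivity
  have hβ : 0 < α * v + β := by positivity
  have hd : 0 < k₂ ^ 2 * k₃ ^ 2 * v * (v + 1) := by positivity
  have hfactor : ∀ w, e * (1 + k₄ ^ 2) / (e - b) * v * w * (w - v) +
      (e / (e - b) + k₄ ^ 2) * w * (w - v) + β * (w - v) - k₂ ^ 2 * k₃ ^ 2 * v * (v + 1) =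
      (α * w + β) * (w - v) - k₂ ^ 2 * k₃ ^ 2 * v * (v + 1) :=
    fun w => by ring
  simpa only [hfactor, sub_eq_zero] using existsUnique_gt_linear_mul_sub_eq hα hβ hd

/-- For `0 < b < e` and `k₂, k₃, k₄ > 0`, for every `v > 0` the cubic
equation
`(e(1+k₄²)/(e−b))·v·w·(w−v) + (e/(e−b)+k₄²)·w·(w−v) + (1+k₂²+k₃²)·(v+1)·(w−v)
  − k₂²k₃²·v·(v+1) = 0`
admits exactly one solution `w > v`. -/
theorem cubic_unique_solution_gt (b e k₂ k₃ k₄ : ℝ)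
    (hb : 0 < b) (hbe : b < e) (hk₂ : 0 < k₂) (hk₃ : 0 < k₃) (hk₄ : 0 < k₄) :
    ∀ v : ℝ, 0 < v → ∃! w : ℝ, v < w ∧
      e * (1 + k₄ ^ 2) / (e - b) * v * w * (w - v) + (e / (e - b) + k₄ ^ 2) * w * (w - v) +
        (1 + k₂ ^ 2 + k₃ ^ 2) * (v + 1) * (w - v) - k₂ ^ 2 * k₃ ^ 2 * v * (v + 1) = 0 :=
  cubic_unique_solution_gt_general b e k₂ k₃ k₄ hb hbe hk₂ hk₃
end

section
/- Let b, e, k₂, k₃, k₄ be real numbers with 0 < b < e and k₂, k₃, k₄ > 0, and for each v > 0 let w(v) denote the unique solution w > v of the equation (e·(1 + k₄²)/(e − b))·v·w·(w − v) + (e/(e − b) + k₄²)·w·(w − v) + (1 + k₂² + k₃²)·(v + 1)·(w − v) − k₂²·k₃²·v·(v + 1) = 0. Then the function v ↦ w(v) is a diffeomorphism of (0, +∞) onto (0, +∞); in particular it is a smooth, strictly increasing bijection of (0, +∞) onto itself, with w(v) → 0 as v → 0⁺ and w(v) → +∞ as v → +∞. -/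
open Set Filter



noncomputable def qbeta (A B C : ℝ) (v : ℝ) : ℝ := C * (v + 1) - (A * v + B) * v
noncomputable def qdisc (A B C D : ℝ) (v : ℝ) : ℝ :=
  qbeta A B C v ^ 2 + 4 * (A * v + B) * ((C + D) * v * (v + 1))
noncomputable def gfun (A B C D : ℝ) (v : ℝ) : ℝ :=
  (-qbeta A B C v + Real.sqrt (qdisc A B C D v)) / (2 * (A * v + B))

lemma apos {A B : ℝ} (hB : 0 < B) (hA : 0 ≤ A) {v : ℝ} (hv : 0 ≤ v) : 0 < A * v + B := by
  nlinarith

lemma discpos {A B C D : ℝ} (hB : 0 < B) (hA : 0 ≤ A) (hC : 0 < C) (hD : 0 < D)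
    {v : ℝ} (hv : 0 ≤ v) : 0 < qdisc A B C D v := by
  rcases eq_or_lt_of_le hv with h | h
  · subst h; simp [qdisc, qbeta]; positivity
  · have ha := apos hB hA hv
    have h1 : 0 < 4 * (A * v + B) * ((C + D) * v * (v + 1)) := by positivity
    have h2 : 0 ≤ qbeta A B C v ^ 2 := sq_nonneg _
    unfold qdisc; linarith

lemma groot {A B C D : ℝ} (hB : 0 < B) (hA : 0 ≤ A) (hC : 0 < C) (hD : 0 < D)
    {v : ℝ} (hv : 0 ≤ v) :
    (A * v + B) * gfun A B C D v ^ 2 + qbeta A B C v * gfun A B C D v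
      - (C + D) * v * (v + 1) = 0 := by
  have ha := apos hB hA hv
  have hd := discpos hB hA hC hD hv
  have hs : Real.sqrt (qdisc A B C D v) ^ 2 = qdisc A B C D v := Real.sq_sqrt hd.le
  have key : ∀ s : ℝ, (A * v + B) * ((-qbeta A B C v + s) / (2 * (A * v + B))) ^ 2
      + qbeta A B C v * ((-qbeta A B C v + s) / (2 * (A * v + B)))
      - (C + D) * v * (v + 1)
      = (s ^ 2 - (qbeta A B C v ^ 2 + 4 * (A * v + B) * ((C + D) * v * (v + 1))))
          / (4 * (A * v + B)) := by
    intro s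
    field_simp
    ring
  rw [gfun, key, ← qdisc, hs]
  simp

lemma ggt {A B C D : ℝ} (hB : 0 < B) (hA : 0 ≤ A) (hC : 0 < C) (hD : 0 < D)
    {v : ℝ} (hv : 0 < v) : v < gfun A B C D v := by
  have ha := apos hB hA hv.le
  have hd := discpos hB hA hC hD hv.le
  have hsp : 0 < Real.sqrt (qdisc A B C D v) := Real.sqrt_pos.2 hd
  rw [gfun, lt_div_iff₀ (by linarith : (0:ℝ) < 2 * (A * v + B))]
  rcases le_or_gt (2 * (A * v + B) * v + qbeta A B C v) 0 with h | h
  · nlinarith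
  · have key : (2 * (A * v + B) * v + qbeta A B C v) < Real.sqrt (qdisc A B C D v) := by
      refine (Real.lt_sqrt h.le).2 ?_
      have hav : 0 < 4 * (A * v + B) * v := by positivity
      have : C * (v + 1) < (C + D) * (v + 1) := by nlinarith
      unfold qdisc qbeta
      nlinarith [mul_lt_mul_of_pos_left this hav]
    linarith
lemma gzero {A B C D : ℝ} (hB : 0 < B) (hC : 0 < C) : gfun A B C D 0 = 0 := by
  simp [gfun, qdisc, qbeta, Real.sqrt_sq hC.le]

lemma gsmooth {A B C D : ℝ} (hB : 0 < B) (hA : 0 ≤ A) (hC : 0 < C) (hD : 0 < D)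
    {v : ℝ} (hv : 0 ≤ v) : ContDiffAt ℝ (⊤ : ℕ∞) (gfun A B C D) v := by
  have ha := apos hB hA hv
  have hd := discpos hB hA hC hD hv
  have hβ : ContDiff ℝ (⊤ : ℕ∞) (qbeta A B C) := by unfold qbeta; fun_prop
  have hdisc : ContDiff ℝ (⊤ : ℕ∞) (qdisc A B C D) := by unfold qdisc qbeta; fun_prop
  have hsqrt : ContDiffAt ℝ (⊤ : ℕ∞) (fun x => Real.sqrt (qdisc A B C D x)) v :=
    hdisc.contDiffAt.sqrt hd.ne'
  have hnum : ContDiffAt ℝ (⊤ : ℕ∞) (fun x => -qbeta A B C x + Real.sqrt (qdisc A B C D x)) v :=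
    (hβ.contDiffAt.neg).add hsqrt
  have hden : ContDiffAt ℝ (⊤ : ℕ∞) (fun x => 2 * (A * x + B)) v := by fun_prop
  exact (hnum.div hden (by positivity)).congr_of_eventuallyEq (by
    filter_upwards with x
    rfl)

lemma gS {A B C D : ℝ} (hB : 0 < B) (hA : 0 ≤ A) {v : ℝ} (hv : 0 ≤ v) :
    2 * (A * v + B) * gfun A B C D v + qbeta A B C v = Real.sqrt (qdisc A B C D v) := by
  have ha := apos hB hA hv
  rw [gfun]
  field_simp
  ring

lemma gderiv {A B C D : ℝ} (hB : 0 < B) (hBA : B < A) (hC : 0 < C) (hD : 0 < D)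
    {v : ℝ} (hv : 0 < v) : 0 < deriv (gfun A B C D) v := by
  have hA : 0 ≤ A := by linarith
  have ha := apos hB hA hv.le
  have hd := discpos hB hA hC hD hv.le
  set g := gfun A B C D with hgdef
  set w := g v with hw
  have hwv : v < w := ggt hB hA hC hD hv
  have hw0 : 0 < w := lt_trans hv hwv
  have hdiff : DifferentiableAt ℝ g v := ((gsmooth hB hA hC hD hv.le).differentiableAt (by simp))
  set d := deriv g v with hd'
  have hg : HasDerivAt g d v := hdiff.hasDerivAt
  have hroot := groot hB hA hC hD (A := A) (B := B) (C := C) (D := D) hv.le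
  rw [← hgdef, ← hw] at hroot
  have h1 : HasDerivAt (fun x : ℝ => A * x + B) A v := by
    simpa using ((hasDerivAt_id v).const_mul A).add_const B
  have h2 : HasDerivAt (fun x => g x ^ 2) (2 * w * d) v := by
    simpa using hg.fun_pow 2
  have h3 := h1.fun_mul h2
  have hq1 : HasDerivAt (fun x : ℝ => C * (x + 1)) C v := by
    simpa using (((hasDerivAt_id v).add_const 1).const_mul C)
  have hq2 : HasDerivAt (fun x : ℝ => (A * x + B) * x) (A * v + (A * v + B) * 1) v :=
    h1.mul (hasDerivAt_id v)
  have h4 : HasDerivAt (fun x => qbeta A B C x) (C - (A * v + (A * v + B) * 1)) v := by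
    unfold qbeta; exact hq1.sub hq2
  have h5 := h4.fun_mul hg
  have h6 : HasDerivAt (fun x : ℝ => (C + D) * x * (x + 1))
      ((C + D) * 1 * (v + 1) + (C + D) * v * 1) v := by
    simpa using ((hasDerivAt_id v).const_mul (C + D)).fun_mul ((hasDerivAt_id v).add_const 1)
  set Fv := A * w ^ 2 + (C - (2 * A * v + B)) * w - (C + D) * (2 * v + 1) with hFv
  set S := 2 * (A * v + B) * w + qbeta A B C v with hS
  have hφ2 : HasDerivAt
      (fun x => (A * x + B) * g x ^ 2 + qbeta A B C x * g x - (C + D) * x * (x + 1))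
      (Fv + S * d) v := by
    refine ((h3.add h5).sub h6).congr_deriv ?_
    rw [hFv, hS]
    unfold qbeta
    ring
  have hzero : (fun x => (A * x + B) * g x ^ 2 + qbeta A B C x * g x - (C + D) * x * (x + 1))
      =ᶠ[nhds v] fun _ => 0 := by
    filter_upwards [Ioi_mem_nhds hv] with x hx
    have h := groot hB hA hC hD (A := A) (B := B) (C := C) (D := D) (le_of_lt hx)
    rw [← hgdef] at h
    linarith
  have hEzero : Fv + S * d = 0 := by
    have h0 : HasDerivAt (fun _ : ℝ => (0:ℝ)) (Fv + S * d) v :=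
      hφ2.congr_of_eventuallyEq hzero.symm
    exact ((hasDerivAt_const v (0:ℝ)).unique h0).symm
  have hSsqrt : S = Real.sqrt (qdisc A B C D v) := by
    rw [hS, hw, hgdef]; exact gS hB hA hv.le
  have hSpos : 0 < S := by rw [hSsqrt]; exact Real.sqrt_pos.2 hd
  have hFvneg : Fv < 0 := by
    have key : (A * v + B) * Fv
        = -(((A * v + B) ^ 2 + C * (A - B)) * w) - (C + D) * (A * v ^ 2 + 2 * B * v + B) := by
      rw [hFv]; unfold qbeta at hroot; linear_combination A * hroot
    have t1 : 0 < ((A * v + B) ^ 2 + C * (A - B)) * w :=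
      mul_pos (by nlinarith [sq_nonneg (A * v + B)]) hw0
    have t2 : 0 < (C + D) * (A * v ^ 2 + 2 * B * v + B) :=
      mul_pos (by linarith) (by nlinarith [mul_nonneg hA (sq_nonneg v)])
    have hneg : (A * v + B) * Fv < 0 := by rw [key]; linarith
    by_contra hcon
    push_neg at hcon
    nlinarith [mul_nonneg ha.le hcon]
  have hdval : d = -Fv / S := by
    field_simp
    linarith [hEzero]
  rw [hdval]
  exact div_pos (by linarith) hSpos

/-- Let `0 < b < e` and `k₂, k₃, k₄ > 0`, and for `v > 0` let `W v` be
the unique solution `w > v` of the cubic equation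
`(e(1+k₄²)/(e−b))·v·w·(w−v) + (e/(e−b)+k₄²)·w·(w−v) + (1+k₂²+k₃²)·(v+1)·(w−v)
  − k₂²k₃²·v·(v+1) = 0`.
Then `v ↦ W v` is a diffeomorphism of `(0, +∞)` onto `(0, +∞)`: it is a smooth, strictly
increasing bijection of `(0, +∞)` onto itself with everywhere nonvanishing (positive)
derivative, `W v → 0` as `v → 0⁺` and `W v → +∞` as `v → +∞`. -/
theorem cubic_solution_function_is_diffeomorphism (b e k₂ k₃ k₄ : ℝ)
    (hb : 0 < b) (hbe : b < e) (hk₂ : 0 < k₂) (hk₃ : 0 < k₃) (hk₄ : 0 < k₄)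
    (W : ℝ → ℝ)
    (hW : ∀ v : ℝ, 0 < v → v < W v ∧
      e * (1 + k₄ ^ 2) / (e - b) * v * W v * (W v - v) +
        (e / (e - b) + k₄ ^ 2) * W v * (W v - v) +
        (1 + k₂ ^ 2 + k₃ ^ 2) * (v + 1) * (W v - v) - k₂ ^ 2 * k₃ ^ 2 * v * (v + 1) = 0)
    (hWuniq : ∀ v : ℝ, 0 < v → ∀ w : ℝ, v < w →
      e * (1 + k₄ ^ 2) / (e - b) * v * w * (w - v) + (e / (e - b) + k₄ ^ 2) * w * (w - v) +
        (1 + k₂ ^ 2 + k₃ ^ 2) * (v + 1) * (w - v) - k₂ ^ 2 * k₃ ^ 2 * v * (v + 1) = 0 →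
      w = W v) :
    ContDiffOn ℝ (⊤ : ℕ∞) W (Ioi 0) ∧
    StrictMonoOn W (Ioi 0) ∧
    BijOn W (Ioi 0) (Ioi 0) ∧
    (∀ v ∈ Ioi (0 : ℝ), 0 < deriv W v) ∧
    Tendsto W (nhdsWithin 0 (Ioi 0)) (nhds 0) ∧
    Tendsto W atTop atTop := by
  have heb : 0 < e - b := by linarith
  have he : 0 < e := by linarith
  set A := e * (1 + k₄ ^ 2) / (e - b) with hAdef
  set B := e / (e - b) + k₄ ^ 2 with hBdef
  set C := 1 + k₂ ^ 2 + k₃ ^ 2 with hCdef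
  set D := k₂ ^ 2 * k₃ ^ 2 with hDdef
  clear_value A B C D
  have hB : 0 < B := by rw [hBdef]; positivity
  have hBA : B < A := by
    have hdiff : A - B = k₄ ^ 2 * b / (e - b) := by
      rw [hAdef, hBdef]; field_simp; ring
    have : 0 < k₄ ^ 2 * b / (e - b) := by positivity
    linarith
  have hA : 0 ≤ A := by linarith
  have hC : 0 < C := by rw [hCdef]; positivity
  have hD : 0 < D := by rw [hDdef]; positivity
  set g := gfun A B C D with hgdef
  -- W agrees with g on Ioi 0
  have hWg : ∀ v ∈ Ioi (0:ℝ), W v = g v := by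
    intro v hv
    have hv' : (0:ℝ) < v := hv
    have hgv : v < g v := ggt hB hA hC hD hv'
    have hr := groot hB hA hC hD (A := A) (B := B) (C := C) (D := D) hv'.le
    rw [← hgdef] at hr
    unfold qbeta at hr
    refine (hWuniq v hv' (g v) hgv ?_).symm
    linear_combination hr
  have hgCD : ContDiffOn ℝ (⊤ : ℕ∞) g (Ioi 0) := fun v hv =>
    (gsmooth hB hA hC hD (le_of_lt hv)).contDiffWithinAt
  have hWCD : ContDiffOn ℝ (⊤ : ℕ∞) W (Ioi 0) := hgCD.congr hWg
  have hderiv : ∀ v ∈ Ioi (0:ℝ), 0 < deriv W v := by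
    intro v hv
    have hdeq : deriv W v = deriv g v := by
      apply Filter.EventuallyEq.deriv_eq
      filter_upwards [Ioi_mem_nhds (show (0:ℝ) < v from hv)] with x hx
      exact hWg x hx
    rw [hdeq, hgdef]
    exact gderiv hB hBA hC hD hv
  have hmono : StrictMonoOn W (Ioi 0) :=
    strictMonoOn_of_deriv_pos (convex_Ioi 0) hWCD.continuousOn
      (fun x hx => hderiv x (by rwa [interior_Ioi] at hx))
  have htend0 : Tendsto W (nhdsWithin 0 (Ioi 0)) (nhds 0) := by
    have hc : ContinuousAt g 0 := (gsmooth hB hA hC hD le_rfl).continuousAt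
    have hg0 : Tendsto g (nhdsWithin 0 (Ioi 0)) (nhds 0) := by
      have ht := hc.tendsto
      rw [hgdef, gzero hB hC] at ht
      exact (ht.mono_left nhdsWithin_le_nhds : _)
    refine Filter.Tendsto.congr' ?_ hg0
    filter_upwards [self_mem_nhdsWithin] with x hx
    exact (hWg x hx).symm
  have htop : Tendsto W atTop atTop := by
    apply tendsto_atTop_mono' atTop ?_ tendsto_id
    filter_upwards [eventually_gt_atTop (0:ℝ)] with v hv
    exact (hW v hv).1.le
  refine ⟨hWCD, hmono, ⟨?_, hmono.injOn, ?_⟩, hderiv, htend0, htop⟩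
  · intro v hv
    exact lt_trans hv (hW v hv).1
  · intro y hy
    have hy' : (0:ℝ) < y := hy
    have hev : ∀ᶠ x in nhdsWithin 0 (Ioi 0), W x < y := htend0.eventually (gt_mem_nhds hy')
    obtain ⟨v₁, h1, h2⟩ := (hev.and eventually_mem_nhdsWithin).exists
    obtain ⟨v₂, hWy, hv₂⟩ :=
      ((htop.eventually (eventually_gt_atTop y)).and (eventually_ge_atTop v₁)).exists
    have hcont : ContinuousOn W (Icc v₁ v₂) :=
      hWCD.continuousOn.mono (fun x hx => lt_of_lt_of_le h2 hx.1)
    obtain ⟨x, hx, hxy⟩ := intermediate_value_Icc hv₂ hcont ⟨h1.le, hWy.le⟩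
    exact ⟨x, lt_of_lt_of_le h2 hx.1, hxy⟩
end

section
/- Let p₁, p₂, p₃ ∈ ℂ³ satisfy ⟨pᵢ, pᵢ⟩ < 0 for i = 1, 2, 3, and write gᵢⱼ := ⟨pᵢ, pⱼ⟩. Then Re(−g₁₂·g₂₃·g₃₁) ≥ 0. (This is the positivity of the real part needed to define the area of an oriented geodesic triangle in the complex hyperbolic plane as ½·arg(−g₁₂·g₂₃·g₃₁).) -/
/-- The Hermitian form of signature `(+ + −)` on `ℂ³`:
`⟨u, v⟩ = u 0 * conj (v 0) + u 1 * conj (v 1) - u 2 * conj (v 2)`. -/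
noncomputable def herm (u v : Fin 3 → ℂ) : ℂ :=
  u 0 * (starRingEnd ℂ) (v 0) + u 1 * (starRingEnd ℂ) (v 1) - u 2 * (starRingEnd ℂ) (v 2)

/-!
The Gram matrix `G = (⟨pᵢ, pⱼ⟩)` equals `P J Pᴴ` with `J = diag(1, 1, -1)`, so `det G = -|det P|² ≤ 0`.
Expanding the determinant, with `dᵢ = ⟨pᵢ, pᵢ⟩ < 0`,
`2 Re(g₁₂ g₂₃ g₃₁) ≤ d₁|g₂₃|² + d₂|g₃₁|² + d₃|g₁₂|² - d₁d₂d₃`,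
and the reverse Cauchy–Schwarz inequality `|gᵢⱼ|² ≥ dᵢdⱼ` for negative vectors bounds each term
`dₖ|gᵢⱼ|²` by `d₁d₂d₃`. Hence `Re(g₁₂ g₂₃ g₃₁) ≤ d₁d₂d₃ < 0`.
-/

open ComplexConjugate Complex Matrix

theorem conj_herm (u v : Fin 3 → ℂ) : conj (herm u v) = herm v u := by
  simp only [herm, map_sub, map_add, map_mul, conj_conj]
  ring

theorem ofReal_re_herm_self (u : Fin 3 → ℂ) : ((herm u u).re : ℂ) = herm u u :=
  conj_eq_iff_re.mp (conj_herm u u)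

theorem re_herm_self (u : Fin 3 → ℂ) :
    (herm u u).re = normSq (u 0) + normSq (u 1) - normSq (u 2) := by
  simp only [herm, mul_conj, sub_re, add_re, ofReal_re]

theorem herm_gram_eq (p : Fin 3 → Fin 3 → ℂ) :
    (of fun i j => herm (p i) (p j)) = of p * diagonal ![1, 1, -1] * (of p)ᴴ := by
  ext i j
  simp [herm, mul_apply, Fin.sum_univ_three, sub_eq_add_neg]

theorem det_herm_gram (p : Fin 3 → Fin 3 → ℂ) :
    (of fun i j => herm (p i) (p j)).det = -(normSq (of p).det : ℂ) := by
  rw [herm_gram_eq, det_mul, det_mul, det_conjTranspose, det_diagonal, normSq_eq_conj_mul_self,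
    star_def]
  simp only [Fin.prod_univ_three, cons_val_zero, cons_val_one, cons_val, mul_one, mul_neg, neg_mul,
    neg_inj]
  ring

theorem herm_gram_det_re_nonpos (p₁ p₂ p₃ : Fin 3 → ℂ) :
    (herm p₁ p₁).re * (herm p₂ p₂).re * (herm p₃ p₃).re
      - (herm p₁ p₁).re * normSq (herm p₂ p₃) - (herm p₂ p₂).re * normSq (herm p₃ p₁)
      - (herm p₃ p₃).re * normSq (herm p₁ p₂)
      + 2 * (herm p₁ p₂ * herm p₂ p₃ * herm p₃ p₁).re ≤ 0 := by
  have h := congrArg re (det_herm_gram ![p₁, p₂, p₃])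
  have hdet := normSq_nonneg (of ![p₁, p₂, p₃]).det
  generalize normSq (of ![p₁, p₂, p₃]).det = D at h hdet
  rw [det_fin_three] at h
  simp only [of_apply, cons_val_zero, cons_val_one, cons_val_two, tail_cons, head_cons] at h
  rw [← conj_herm p₁ p₂, ← conj_herm p₂ p₃, ← conj_herm p₃ p₁, ← ofReal_re_herm_self p₁,
    ← ofReal_re_herm_self p₂, ← ofReal_re_herm_self p₃] at h
  simp only [normSq_apply, mul_re, mul_im, sub_re, add_re, neg_re, conj_re, conj_im, ofReal_re,
    ofReal_im] at h ⊢
  linarith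

theorem normSq_mul_conj_add_mul_conj_le (x y a b : ℂ) :
    normSq (x * conj a + y * conj b) ≤ (normSq x + normSq y) * (normSq a + normSq b) := by
  have lagrange : normSq (x * conj a + y * conj b) + normSq (x * b - y * a)
      = (normSq x + normSq y) * (normSq a + normSq b) := by
    simp only [normSq_apply, add_re, add_im, sub_re, sub_im, mul_re, mul_im, conj_re, conj_im]
    ring
  linarith [normSq_nonneg (x * b - y * a)]

theorem re_herm_self_nonneg_of_herm_eq_zero {p w : Fin 3 → ℂ} (hp : (herm p p).re < 0)
    (hw : herm w p = 0) : 0 ≤ (herm w w).re := by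
  rw [re_herm_self] at hp ⊢
  have hw₂ : w 2 * conj (p 2) = w 0 * conj (p 0) + w 1 * conj (p 1) := by
    rw [herm] at hw
    linear_combination -hw
  have hp₂ : 0 < normSq (p 2) := by linarith [normSq_nonneg (p 0), normSq_nonneg (p 1)]
  have key : normSq (w 2) * normSq (p 2) ≤ (normSq (w 0) + normSq (w 1)) * normSq (p 2) :=
    calc normSq (w 2) * normSq (p 2) = normSq (w 0 * conj (p 0) + w 1 * conj (p 1)) := by
          rw [← hw₂, normSq_mul, normSq_conj]
      _ ≤ (normSq (w 0) + normSq (w 1)) * (normSq (p 0) + normSq (p 1)) :=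
          normSq_mul_conj_add_mul_conj_le _ _ _ _
      _ ≤ (normSq (w 0) + normSq (w 1)) * normSq (p 2) :=
          mul_le_mul_of_nonneg_left (by linarith) (add_nonneg (normSq_nonneg _) (normSq_nonneg _))
  linarith [le_of_mul_le_mul_right key hp₂]

theorem re_herm_self_mul_le_normSq_herm {p : Fin 3 → ℂ} (hp : (herm p p).re < 0)
    (q : Fin 3 → ℂ) : (herm p p).re * (herm q q).re ≤ normSq (herm p q) := by
  -- `w` is `⟨p, p⟩` times the projection of `q` to `p^⊥`, a positive semidefinite subspace
  set w : Fin 3 → ℂ := fun i => herm p p * q i - herm q p * p i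
  have hwp : herm w p = 0 := by
    simp only [herm, w]
    ring
  have hww : herm w w = herm p p * (herm p p * herm q q - conj (herm p q) * herm p q) := by
    simp only [herm, w, map_sub, map_add, map_mul, conj_conj]
    ring
  rw [← ofReal_re_herm_self p, ← ofReal_re_herm_self q, ← normSq_eq_conj_mul_self] at hww
  have hw := re_herm_self_nonneg_of_herm_eq_zero hp hwp
  rw [hww] at hw
  norm_cast at hw
  linarith [nonpos_of_mul_nonneg_right hw hp]

theorem re_herm_triple_product_le {p₁ p₂ p₃ : Fin 3 → ℂ} (h₁ : (herm p₁ p₁).re < 0)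
    (h₂ : (herm p₂ p₂).re < 0) (h₃ : (herm p₃ p₃).re < 0) :
    (herm p₁ p₂ * herm p₂ p₃ * herm p₃ p₁).re
      ≤ (herm p₁ p₁).re * (herm p₂ p₂).re * (herm p₃ p₃).re := by
  have h₂₃ := mul_le_mul_of_nonpos_left (re_herm_self_mul_le_normSq_herm h₂ p₃) h₁.le
  have h₃₁ := mul_le_mul_of_nonpos_left (re_herm_self_mul_le_normSq_herm h₃ p₁) h₂.le
  have h₁₂ := mul_le_mul_of_nonpos_left (re_herm_self_mul_le_normSq_herm h₁ p₂) h₃.le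
  linarith [herm_gram_det_re_nonpos p₁ p₂ p₃]

/-- For negative vectors `p₁, p₂, p₃` of the form of signature `(2,1)`,
writing `gᵢⱼ = ⟨pᵢ, pⱼ⟩`, one has `Re (−g₁₂·g₂₃·g₃₁) ≥ 0`. -/
theorem re_neg_triple_product_nonneg (p₁ p₂ p₃ : Fin 3 → ℂ)
    (h₁ : (herm p₁ p₁).re < 0) (h₂ : (herm p₂ p₂).re < 0) (h₃ : (herm p₃ p₃).re < 0) :
    0 ≤ (-(herm p₁ p₂ * herm p₂ p₃ * herm p₃ p₁)).re := by
  have hneg : (herm p₁ p₁).re * (herm p₂ p₂).re * (herm p₃ p₃).re < 0 :=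
    mul_neg_of_pos_of_neg (mul_pos_of_neg_of_neg h₁ h₂) h₃
  rw [neg_re]
  linarith [re_herm_triple_product_le h₁ h₂ h₃]
end
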